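/- arXiv:1607.01053 — 9 statements merged into one kernel-verified Lean document; each statement's English description precedes it below -/
import Mathlib

section
/- Let (fₙ)_{n≥0} be a real-valued martingale with differences dₙ = fₙ - f_{n-1} satisfying ‖dₙ‖_∞ ≤ 1 for all n ≥ 1. Then for any real coefficients (xₖ), E[exp(Σ_{k=1}^n xₖ dₖ)] ≤ exp(Σ_{k=1}^n xₖ²/2). -/
/-!
For `|d| ≤ 1`, convexity of `exp` gives `exp (t d) ≤ cosh t + d sinh t`. Multiplying by the
`ℱ_{N-1}`-measurable factor `exp (∑_{k<N} x_k d_k)` and integrating, the `sinh` term vanishes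
because martingale increments are orthogonal to bounded past-measurable functions, so each
increment costs at most a factor `cosh x_N ≤ exp (x_N² / 2)`; induct on `N`.
-/

open MeasureTheory Real

namespace MeasureTheory

variable {Ω : Type*} {m : MeasurableSpace Ω} {μ : Measure Ω} {ℱ : Filtration ℕ m}
  {f : ℕ → Ω → ℝ}

noncomputable def martingaleTransform (x : ℕ → ℝ) (f : ℕ → Ω → ℝ) (N : ℕ) (ω : Ω) : ℝ :=
  ∑ k ∈ Finset.Icc 1 N, x k * (f k ω - f (k - 1) ω)

lemma martingaleTransform_succ (x : ℕ → ℝ) (f : ℕ → Ω → ℝ) (N : ℕ) (ω : Ω) :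
    martingaleTransform x f (N + 1) ω
      = martingaleTransform x f N ω + x (N + 1) * (f (N + 1) ω - f N ω) := by
  simp [martingaleTransform, Finset.sum_Icc_succ_top]

lemma stronglyMeasurable_martingaleTransform (hf : StronglyAdapted ℱ f)
    (x : ℕ → ℝ) (N : ℕ) : StronglyMeasurable[ℱ N] (martingaleTransform x f N) := by
  refine Finset.stronglyMeasurable_fun_sum _ fun k hk => ?_
  have hkN : k ≤ N := (Finset.mem_Icc.mp hk).2
  exact (((hf k).mono (ℱ.mono hkN)).sub ((hf (k - 1)).mono (ℱ.mono (by omega)))).const_mul _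

lemma ae_abs_martingaleTransform_le (hd : ∀ k, 1 ≤ k → ∀ᵐ ω ∂μ, |f k ω - f (k - 1) ω| ≤ 1)
    (x : ℕ → ℝ) (N : ℕ) :
    ∀ᵐ ω ∂μ, |martingaleTransform x f N ω| ≤ ∑ k ∈ Finset.Icc 1 N, |x k| := by
  have hd' : ∀ᵐ ω ∂μ, ∀ k, 1 ≤ k → |f k ω - f (k - 1) ω| ≤ 1 :=
    ae_all_iff.2 fun k => Filter.eventually_imp_distrib_left.2 (hd k)
  filter_upwards [hd'] with ω hω
  refine (Finset.abs_sum_le_sum_abs _ _).trans (Finset.sum_le_sum fun k hk => ?_)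
  rw [abs_mul]
  exact mul_le_of_le_one_right (abs_nonneg _) (hω k (Finset.mem_Icc.mp hk).1)

lemma ae_norm_exp_martingaleTransform_le
    (hd : ∀ k, 1 ≤ k → ∀ᵐ ω ∂μ, |f k ω - f (k - 1) ω| ≤ 1) (x : ℕ → ℝ) (N : ℕ) :
    ∀ᵐ ω ∂μ, ‖exp (martingaleTransform x f N ω)‖ ≤ exp (∑ k ∈ Finset.Icc 1 N, |x k|) := by
  filter_upwards [ae_abs_martingaleTransform_le hd x N] with ω hω
  rw [norm_eq_abs, abs_exp, exp_le_exp]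
  exact (le_abs_self _).trans hω

lemma Martingale.integral_mul_sub_eq_zero [IsFiniteMeasure μ] (hf : Martingale f ℱ μ)
    {i j : ℕ} (hij : i ≤ j) {g : Ω → ℝ} (hg : StronglyMeasurable[ℱ i] g) {C : ℝ}
    (hC : ∀ᵐ ω ∂μ, ‖g ω‖ ≤ C) :
    ∫ ω, g ω * (f j ω - f i ω) ∂μ = 0 := by
  have hdiff : Integrable (f j - f i) μ := (hf.integrable j).sub (hf.integrable i)
  have hprod : Integrable (g * (f j - f i)) μ :=
    hdiff.bdd_mul (hg.mono (ℱ.le i)).aestronglyMeasurable hC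
  have hcond : μ[f j - f i | ℱ i] =ᵐ[μ] 0 := by
    filter_upwards [condExp_sub (hf.integrable j) (hf.integrable i) (ℱ i),
      hf.condExp_ae_eq hij, hf.condExp_ae_eq (le_refl i)] with ω hsub hj hi
    simp [hsub, hj, hi]
  calc ∫ ω, g ω * (f j ω - f i ω) ∂μ = ∫ ω, μ[g * (f j - f i) | ℱ i] ω ∂μ :=
        (integral_condExp (ℱ.le i)).symm
    _ = ∫ ω, g ω * 0 ∂μ := by
        refine integral_congr_ae ?_
        filter_upwards [condExp_mul_of_stronglyMeasurable_left hg hprod hdiff, hcond]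
          with ω hpull h0
        rw [hpull, Pi.mul_apply, h0, Pi.zero_apply]
    _ = 0 := by simp

lemma Martingale.integral_mul_exp_mul_sub_le [IsFiniteMeasure μ] (hf : Martingale f ℱ μ)
    {M : ℕ} (hd : ∀ᵐ ω ∂μ, |f (M + 1) ω - f M ω| ≤ 1) {g : Ω → ℝ}
    (hg : StronglyMeasurable[ℱ M] g) (hg0 : 0 ≤ g) {C : ℝ} (hC : ∀ᵐ ω ∂μ, ‖g ω‖ ≤ C) (t : ℝ) :
    ∫ ω, g ω * exp (t * (f (M + 1) ω - f M ω)) ∂μ ≤ cosh t * ∫ ω, g ω ∂μ := by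
  have hgi : Integrable g μ := Integrable.of_bound (hg.mono (ℱ.le M)).aestronglyMeasurable C hC
  have hgd : Integrable (fun ω => g ω * (f (M + 1) ω - f M ω)) μ :=
    ((hf.integrable _).sub (hf.integrable _)).bdd_mul hgi.aestronglyMeasurable hC
  calc ∫ ω, g ω * exp (t * (f (M + 1) ω - f M ω)) ∂μ
      ≤ ∫ ω, cosh t * g ω + sinh t * (g ω * (f (M + 1) ω - f M ω)) ∂μ := by
        refine integral_mono_of_nonneg (.of_forall fun ω => mul_nonneg (hg0 ω) (exp_pos _).le)
          ((hgi.const_mul _).add (hgd.const_mul _)) ?_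
        filter_upwards [hd] with ω hω
        have hconv := exp_mul_le_cosh_add_mul_sinh hω t
        rw [mul_comm] at hconv
        calc g ω * exp (t * (f (M + 1) ω - f M ω))
            ≤ g ω * (cosh t + (f (M + 1) ω - f M ω) * sinh t) :=
              mul_le_mul_of_nonneg_left hconv (hg0 ω)
          _ = _ := by ring
    _ = cosh t * ∫ ω, g ω ∂μ := by
        rw [integral_add (hgi.const_mul _) (hgd.const_mul _), integral_const_mul,
          integral_const_mul, hf.integral_mul_sub_eq_zero M.le_succ hg hC, mul_zero, add_zero]

theorem Martingale.integral_exp_martingaleTransform_le [IsProbabilityMeasure μ]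
    (hf : Martingale f ℱ μ) (hd : ∀ k, 1 ≤ k → ∀ᵐ ω ∂μ, |f k ω - f (k - 1) ω| ≤ 1)
    (x : ℕ → ℝ) (N : ℕ) :
    ∫ ω, exp (martingaleTransform x f N ω) ∂μ ≤ exp (∑ k ∈ Finset.Icc 1 N, x k ^ 2 / 2) := by
  induction N with
  | zero => simp [martingaleTransform]
  | succ M ih =>
    have hstep := hf.integral_mul_exp_mul_sub_le (hd (M + 1) (by omega))
      (continuous_exp.comp_stronglyMeasurable
        (stronglyMeasurable_martingaleTransform hf.stronglyAdapted x M))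
      (fun ω => (exp_pos _).le) (ae_norm_exp_martingaleTransform_le hd x M) (x (M + 1))
    calc ∫ ω, exp (martingaleTransform x f (M + 1) ω) ∂μ
        = ∫ ω, exp (martingaleTransform x f M ω) * exp (x (M + 1) * (f (M + 1) ω - f M ω)) ∂μ := by
          simp only [martingaleTransform_succ, exp_add]
      _ ≤ cosh (x (M + 1)) * ∫ ω, exp (martingaleTransform x f M ω) ∂μ := hstep
      _ ≤ exp (x (M + 1) ^ 2 / 2) * exp (∑ k ∈ Finset.Icc 1 M, x k ^ 2 / 2) :=
          mul_le_mul (cosh_le_exp_half_sq _) ih (integral_nonneg fun _ => (exp_pos _).le)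
            (exp_pos _).le
      _ = exp (∑ k ∈ Finset.Icc 1 (M + 1), x k ^ 2 / 2) := by
          rw [← exp_add, Finset.sum_Icc_succ_top (by omega), add_comm]

end MeasureTheory

theorem azuma_inequality
    {Ω : Type*} {m : MeasurableSpace Ω} {μ : Measure Ω} [IsProbabilityMeasure μ]
    (ℱ : Filtration ℕ m) (f : ℕ → Ω → ℝ)
    (hmart : Martingale f ℱ μ)
    (hbdd : ∀ n : ℕ, 1 ≤ n → ∀ᵐ ω ∂μ, |f n ω - f (n - 1) ω| ≤ 1)
    (x : ℕ → ℝ) (n : ℕ) :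
    ∫⁻ ω, ENNReal.ofReal
        (Real.exp (∑ k ∈ Finset.Icc 1 n, x k * (f k ω - f (k - 1) ω))) ∂μ
      ≤ ENNReal.ofReal (Real.exp (∑ k ∈ Finset.Icc 1 n, (x k) ^ 2 / 2)) := by
  have hint : Integrable (fun ω => exp (martingaleTransform x f n ω)) μ :=
    Integrable.of_bound ((continuous_exp.comp_stronglyMeasurable
        (stronglyMeasurable_martingaleTransform hmart.stronglyAdapted x n)).mono
      (ℱ.le n)).aestronglyMeasurable _ (ae_norm_exp_martingaleTransform_le hbdd x n)
  change ∫⁻ ω, ENNReal.ofReal (exp (martingaleTransform x f n ω)) ∂μ ≤ _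
  rw [← ofReal_integral_eq_lintegral_ofReal hint (.of_forall fun _ => (exp_pos _).le)]
  exact ENNReal.ofReal_le_ofReal (hmart.integral_exp_martingaleTransform_le hbdd x n)
end

section
/- Let (zₙ) be an i.i.d. sequence of random variables uniformly distributed on the unit circle 𝕋 ⊂ ℂ. Then for any finitely supported complex sequence (xₙ), E[exp(Re(Σ xₙ zₙ))] ≤ exp(Σ |xₙ|²/2). -/
/-!
Each `Re (xₙ zₙ)` takes values in `[-‖xₙ‖, ‖xₙ‖]` and has mean zero, because the uniform measure
on the circle has barycentre `0`. By Hoeffding's lemma it is therefore sub-Gaussian with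
parameter `‖xₙ‖²`; sub-Gaussian parameters add over independent sums, and the moment generating
function of the sum at `1` is the left-hand side.
-/

open MeasureTheory ProbabilityTheory

/-- The normalized arc-length (Haar) measure on the unit circle of `ℂ`,
realized as the image of the normalized Lebesgue measure on `(0, 2π]`
under `t ↦ exp(i t)`. -/
noncomputable def circleHaar : Measure ℂ :=
  Measure.map (fun t : ℝ => Complex.exp (Complex.I * t))
    ((ENNReal.ofReal (2 * Real.pi))⁻¹ •
      (MeasureTheory.volume.restrict (Set.Ioc (0 : ℝ) (2 * Real.pi))))

open Real NNReal

instance isProbabilityMeasure_circleHaar : IsProbabilityMeasure circleHaar := by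
  constructor
  rw [circleHaar, Measure.map_apply (by fun_prop) MeasurableSet.univ]
  simp only [Measure.smul_apply, Set.preimage_univ, Measure.restrict_apply_univ, Real.volume_Ioc,
    sub_zero, smul_eq_mul]
  exact ENNReal.inv_mul_cancel (by simp [Real.pi_pos]) ENNReal.ofReal_ne_top

lemma ae_norm_eq_one_circleHaar : ∀ᵐ w ∂circleHaar, ‖w‖ = 1 := by
  rw [circleHaar, ae_map_iff (by fun_prop) (measurableSet_eq_fun (by fun_prop) (by fun_prop))]
  exact .of_forall fun t ↦ by simp [Complex.norm_exp]

lemma integral_id_circleHaar : ∫ w, w ∂circleHaar = 0 := by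
  have h2π : (0 : ℝ) ≤ 2 * π := by positivity
  rw [circleHaar, integral_map (f := fun w ↦ w) (by fun_prop) aestronglyMeasurable_id,
    integral_smul_measure, ← intervalIntegral.integral_of_le h2π,
    integral_exp_mul_complex Complex.I_ne_zero]
  simp [mul_comm Complex.I, Complex.exp_two_pi_mul_I]

lemma integrable_id_circleHaar : Integrable id circleHaar :=
  .of_bound aestronglyMeasurable_id 1 (ae_norm_eq_one_circleHaar.mono fun _ h ↦ h.le)

section

variable {Ω : Type*} [MeasurableSpace Ω] {μ : Measure Ω}

lemma ProbabilityTheory.HasSubgaussianMGF.lintegral_ofReal_exp_le {X : Ω → ℝ} {c : ℝ≥0}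
    (h : HasSubgaussianMGF X c μ) :
    ∫⁻ ω, ENNReal.ofReal (exp (X ω)) ∂μ ≤ ENNReal.ofReal (exp (c / 2)) := by
  rw [← ofReal_integral_eq_lintegral_ofReal (by simpa using h.integrable_exp_mul 1)
    (.of_forall fun _ ↦ (exp_pos _).le)]
  gcongr
  simpa [mgf] using h.mgf_le 1

lemma hasSubgaussianMGF_re_mul_of_map_eq_circleHaar [IsProbabilityMeasure μ] {z : Ω → ℂ}
    (hz : Measurable z) (hμz : μ.map z = circleHaar) (x : ℂ) :
    HasSubgaussianMGF (fun ω ↦ (x * z ω).re) (‖x‖₊ ^ 2) μ := by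
  have hbound : ∀ᵐ ω ∂μ, (x * z ω).re ∈ Set.Icc (-‖x‖) ‖x‖ := by
    filter_upwards [ae_of_ae_map hz.aemeasurable (hμz ▸ ae_norm_eq_one_circleHaar)] with ω hω
    simpa [abs_le, hω] using Complex.abs_re_le_norm (x * z ω)
  have hmean : ∫ ω, (x * z ω).re ∂μ = 0 := by
    rw [← integral_map (f := fun w ↦ (x * w).re) hz.aemeasurable (by fun_prop), hμz]
    calc ∫ w, (x * w).re ∂circleHaar = (∫ w, x * w ∂circleHaar).re :=
          integral_re (integrable_id_circleHaar.const_mul x)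
      _ = 0 := by rw [integral_const_mul, integral_id_circleHaar, mul_zero, Complex.zero_re]
  convert hasSubgaussianMGF_of_mem_Icc_of_integral_eq_zero (by fun_prop) hbound hmean using 1
  ext
  simp [← two_mul]

end

theorem steinhaus_subgaussian
    {Ω : Type*} [MeasurableSpace Ω] (μ : Measure Ω) [IsProbabilityMeasure μ]
    (z : ℕ → Ω → ℂ) (hmeas : ∀ n, Measurable (z n))
    (hind : iIndepFun z μ)
    (hdist : ∀ n, Measure.map (z n) μ = circleHaar) :
    ∀ (F : Finset ℕ) (x : ℕ → ℂ),
      ∫⁻ ω, ENNReal.ofReal (Real.exp ((∑ n ∈ F, x n * z n ω).re)) ∂μ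
        ≤ ENNReal.ofReal (Real.exp (∑ n ∈ F, ‖x n‖ ^ 2 / 2)) := by
  intro F x
  have hsum : HasSubgaussianMGF (fun ω ↦ ∑ n ∈ F, (x n * z n ω).re) (∑ n ∈ F, ‖x n‖₊ ^ 2) μ :=
    HasSubgaussianMGF.sum_of_iIndepFun (hind.comp (fun n w ↦ (x n * w).re) fun n ↦ by fun_prop)
      fun n _ ↦ hasSubgaussianMGF_re_mul_of_map_eq_circleHaar (hmeas n) (hdist n) (x n)
  simpa [Complex.re_sum, Finset.sum_div] using hsum.lintegral_ofReal_exp_le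
end

section
/- If a real random variable f with mean 0 satisfies E[exp(f²)] ≤ e, then f is subgaussian with constant at most (8e)^{1/2}, i.e., E[exp(x f)] ≤ exp(8e·x²/2) for all real x. -/
/-!
Since `exp y ≤ y + exp (y ^ 2)` for every real `y`, the mean-zero hypothesis kills the linear
term and `E exp (x f) ≤ E exp (x² f²)`. For `x² ≤ 1`, convexity of `exp` on the segment `[0, f²]`
bounds this by `1 + x² (E exp (f²) - 1) ≤ 1 + x² (e - 1)`. For `x² > 1`, the elementary
inequality `x f ≤ x² / 4 + f²` gives `E exp (x f) ≤ e · exp (x² / 4)`.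
-/

open MeasureTheory Real

namespace Real

lemma exp_le_add_exp_sq (y : ℝ) : exp y ≤ y + exp (y ^ 2) := by
  have hsq : y ^ 2 + 1 ≤ exp (y ^ 2) := add_one_le_exp _
  rcases le_or_gt |y| 1 with hy | hy
  · have := (abs_le.1 (abs_exp_sub_one_sub_id_le hy)).2
    linarith
  rcases lt_abs.1 hy with hy | hy
  · have := exp_le_exp.2 (show y ≤ y ^ 2 by nlinarith)
    linarith
  · have := exp_le_one_iff.2 (show y ≤ 0 by linarith)
    nlinarith

lemma exp_mul_le_one_sub_add_mul_exp {a : ℝ} (ha₀ : 0 ≤ a) (ha₁ : a ≤ 1) (s : ℝ) :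
    exp (a * s) ≤ 1 - a + a * exp s := by
  have := convexOn_exp.2 (Set.mem_univ s) (Set.mem_univ 0) ha₀ (sub_nonneg.2 ha₁)
    (add_sub_cancel a 1)
  simp only [smul_eq_mul, mul_zero, add_zero, exp_zero, mul_one] at this
  linarith

lemma exp_mul_le_add_one_sub_sq_add_sq_mul_exp_sq {x : ℝ} (hx : x ^ 2 ≤ 1) (t : ℝ) :
    exp (x * t) ≤ x * t + (1 - x ^ 2 + x ^ 2 * exp (t ^ 2)) := by
  have := exp_mul_le_one_sub_add_mul_exp (sq_nonneg x) hx (t ^ 2)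
  rw [← mul_pow] at this
  linarith [exp_le_add_exp_sq (x * t)]

lemma exp_mul_le_exp_sq_div_four_mul_exp_sq (x t : ℝ) :
    exp (x * t) ≤ exp (x ^ 2 / 4) * exp (t ^ 2) := by
  rw [← exp_add]
  exact exp_le_exp.2 (by nlinarith [sq_nonneg (x / 2 - t)])

end Real

section ExpMoments

variable {Ω : Type*} [MeasurableSpace Ω] {μ : Measure Ω} {f : Ω → ℝ}

lemma integrable_exp_sq_of_lintegral_ne_top (hf : AEStronglyMeasurable f μ)
    (h : ∫⁻ ω, ENNReal.ofReal (exp (f ω ^ 2)) ∂μ ≠ ⊤) :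
    Integrable (fun ω ↦ exp (f ω ^ 2)) μ :=
  (lintegral_ofReal_ne_top_iff_integrable (by fun_prop)
    (ae_of_all _ fun _ ↦ (exp_pos _).le)).1 h

lemma integrable_exp_mul_of_integrable_exp_sq (hf : AEStronglyMeasurable f μ)
    (h : Integrable (fun ω ↦ exp (f ω ^ 2)) μ) (x : ℝ) :
    Integrable (fun ω ↦ exp (x * f ω)) μ :=
  (h.const_mul (exp (x ^ 2 / 4))).mono' (by fun_prop) <| ae_of_all _ fun ω ↦ by
    rw [Real.norm_of_nonneg (exp_pos _).le]
    exact exp_mul_le_exp_sq_div_four_mul_exp_sq x (f ω)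

lemma integral_exp_mul_le_exp_sq_div_four_mul (hf : AEStronglyMeasurable f μ)
    (h : Integrable (fun ω ↦ exp (f ω ^ 2)) μ) (x : ℝ) :
    ∫ ω, exp (x * f ω) ∂μ ≤ exp (x ^ 2 / 4) * ∫ ω, exp (f ω ^ 2) ∂μ := by
  rw [← integral_const_mul]
  exact integral_mono (integrable_exp_mul_of_integrable_exp_sq hf h x) (h.const_mul _)
    fun ω ↦ exp_mul_le_exp_sq_div_four_mul_exp_sq x (f ω)

lemma integral_exp_mul_le_of_sq_le_one [IsProbabilityMeasure μ] (hf : Integrable f μ)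
    (hmean : ∫ ω, f ω ∂μ = 0) (h : Integrable (fun ω ↦ exp (f ω ^ 2)) μ) {x : ℝ}
    (hx : x ^ 2 ≤ 1) :
    ∫ ω, exp (x * f ω) ∂μ ≤ 1 - x ^ 2 + x ^ 2 * ∫ ω, exp (f ω ^ 2) ∂μ := by
  have hquad : Integrable (fun ω ↦ 1 - x ^ 2 + x ^ 2 * exp (f ω ^ 2)) μ :=
    (integrable_const _).add (h.const_mul _)
  calc ∫ ω, exp (x * f ω) ∂μ
      ≤ ∫ ω, x * f ω + (1 - x ^ 2 + x ^ 2 * exp (f ω ^ 2)) ∂μ :=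
        integral_mono (integrable_exp_mul_of_integrable_exp_sq hf.1 h x)
          ((hf.const_mul x).add hquad)
          fun ω ↦ exp_mul_le_add_one_sub_sq_add_sq_mul_exp_sq hx (f ω)
    _ = 1 - x ^ 2 + x ^ 2 * ∫ ω, exp (f ω ^ 2) ∂μ := by
        rw [integral_add (hf.const_mul x) hquad, integral_add (integrable_const _)
          (h.const_mul _), integral_const_mul, integral_const_mul, hmean, integral_const,
          probReal_univ, one_smul, mul_zero, zero_add]

end ExpMoments

theorem psi_two_implies_subgaussian
    {Ω : Type*} [MeasurableSpace Ω] (μ : Measure Ω) [IsProbabilityMeasure μ]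
    (f : Ω → ℝ) (hf : Integrable f μ) (hmean : ∫ ω, f ω ∂μ = 0)
    (hpsi : ∫⁻ ω, ENNReal.ofReal (Real.exp ((f ω) ^ 2)) ∂μ
              ≤ ENNReal.ofReal (Real.exp 1)) :
    ∀ x : ℝ,
      ∫⁻ ω, ENNReal.ofReal (Real.exp (x * f ω)) ∂μ
        ≤ ENNReal.ofReal (Real.exp (8 * Real.exp 1 * x ^ 2 / 2)) := by
  intro x
  have hsq : Integrable (fun ω ↦ exp (f ω ^ 2)) μ :=
    integrable_exp_sq_of_lintegral_ne_top hf.1 (ne_top_of_le_ne_top ENNReal.ofReal_ne_top hpsi)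
  have hsq_le : ∫ ω, exp (f ω ^ 2) ∂μ ≤ exp 1 := by
    rw [integral_eq_lintegral_of_nonneg_ae (ae_of_all _ fun _ ↦ (exp_pos _).le) hsq.1]
    exact ENNReal.toReal_le_of_le_ofReal (exp_pos 1).le hpsi
  have he : 2 ≤ exp 1 := by linarith [add_one_le_exp 1]
  rw [← ofReal_integral_eq_lintegral_ofReal (integrable_exp_mul_of_integrable_exp_sq hf.1 hsq x)
    (ae_of_all _ fun _ ↦ (exp_pos _).le)]
  refine ENNReal.ofReal_le_ofReal ?_
  rcases le_or_gt (x ^ 2) 1 with hx | hx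
  · calc ∫ ω, exp (x * f ω) ∂μ ≤ 1 - x ^ 2 + x ^ 2 * ∫ ω, exp (f ω ^ 2) ∂μ :=
          integral_exp_mul_le_of_sq_le_one hf hmean hsq hx
      _ ≤ x ^ 2 * (exp 1 - 1) + 1 := by nlinarith [sq_nonneg x]
      _ ≤ exp (x ^ 2 * (exp 1 - 1)) := add_one_le_exp _
      _ ≤ exp (8 * exp 1 * x ^ 2 / 2) := exp_le_exp.2 (by nlinarith [sq_nonneg x])
  · calc ∫ ω, exp (x * f ω) ∂μ ≤ exp (x ^ 2 / 4) * ∫ ω, exp (f ω ^ 2) ∂μ :=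
          integral_exp_mul_le_exp_sq_div_four_mul hf.1 hsq x
      _ ≤ exp (x ^ 2 / 4) * exp 1 := by gcongr
      _ = exp (x ^ 2 / 4 + 1) := (exp_add _ _).symm
      _ ≤ exp (8 * exp 1 * x ^ 2 / 2) := exp_le_exp.2 (by nlinarith)
end

section
/- If a real random variable f is subgaussian with constant 1 (i.e., E[exp(xf)] ≤ exp(x²/2) for all real x), then E[exp((f/c)²)] ≤ e for c = (2(e+1)/(e-1))^{1/2}. -/
/-!
Linearize the square with a standard Gaussian `g` independent of `f`: `exp (s² / 2) = 𝔼 exp (s g)`.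
With `s = √(2a) f` and Fubini, `𝔼 exp (a f²) = 𝔼_g 𝔼 exp (√(2a) g f) ≤ 𝔼_g exp (a g²) = (1 - 2a)^(-1/2)`
for `0 ≤ a < 1/2`. The choice `a = c⁻² = (e - 1) / (2(e + 1))` gives `1 - 2a = 2 / (e + 1)`, and
`√((e + 1) / 2) ≤ e`.
-/

open MeasureTheory ProbabilityTheory Real

lemma lintegral_exp_mul_gaussianReal (s : ℝ) :
    ∫⁻ t, ENNReal.ofReal (exp (s * t)) ∂gaussianReal 0 1 = ENNReal.ofReal (exp (s ^ 2 / 2)) := by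
  rw [← ofReal_integral_eq_lintegral_ofReal (integrable_exp_mul_gaussianReal s)
    (ae_of_all _ fun t => (exp_pos _).le)]
  have := congrFun (mgf_fun_id_gaussianReal (μ := 0) (v := 1)) s
  simp only [mgf] at this
  simp [this]

lemma lintegral_exp_mul_sq_gaussianReal {a : ℝ} (ha : a < 1 / 2) :
    ∫⁻ t, ENNReal.ofReal (exp (a * t ^ 2)) ∂gaussianReal 0 1 = ENNReal.ofReal (√(1 - 2 * a))⁻¹ := by
  have hb : 0 < 1 / 2 - a := by linarith
  have hdens : ∀ t : ℝ, gaussianPDF 0 1 t * ENNReal.ofReal (exp (a * t ^ 2))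
      = ENNReal.ofReal ((√(2 * π))⁻¹ * exp (-(1 / 2 - a) * t ^ 2)) := by
    intro t
    rw [gaussianPDF, ← ENNReal.ofReal_mul (gaussianPDFReal_nonneg _ _ _), gaussianPDFReal,
      mul_assoc, ← exp_add]
    congr 3
    · simp
    · simp only [NNReal.coe_one]
      ring
  rw [gaussianReal_of_var_ne_zero _ one_ne_zero,
    lintegral_withDensity_eq_lintegral_mul _ (measurable_gaussianPDF 0 1) (by fun_prop)]
  simp only [Pi.mul_apply, hdens]
  rw [← ofReal_integral_eq_lintegral_ofReal ((integrable_exp_neg_mul_sq hb).const_mul _)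
    (ae_of_all _ fun t => by positivity), integral_const_mul, integral_gaussian]
  congr 1
  rw [← sqrt_inv, ← sqrt_inv, ← sqrt_mul (by positivity)]
  congr 1
  field_simp

theorem lintegral_exp_mul_sq_le_of_subgaussian {Ω : Type*} [MeasurableSpace Ω] {μ : Measure Ω}
    [SFinite μ] {f : Ω → ℝ} (hf : Measurable f)
    (hsub : ∀ x : ℝ, ∫⁻ ω, ENNReal.ofReal (exp (x * f ω)) ∂μ ≤ ENNReal.ofReal (exp (x ^ 2 / 2)))
    {a : ℝ} (ha₀ : 0 ≤ a) (ha : a < 1 / 2) :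
    ∫⁻ ω, ENNReal.ofReal (exp (a * f ω ^ 2)) ∂μ ≤ ENNReal.ofReal (√(1 - 2 * a))⁻¹ := by
  set s := √(2 * a)
  have hs : s ^ 2 = 2 * a := sq_sqrt (by linarith)
  calc ∫⁻ ω, ENNReal.ofReal (exp (a * f ω ^ 2)) ∂μ
      = ∫⁻ ω, ∫⁻ t, ENNReal.ofReal (exp (s * f ω * t)) ∂gaussianReal 0 1 ∂μ := by
        refine lintegral_congr fun ω => ?_
        rw [lintegral_exp_mul_gaussianReal, mul_pow, hs]
        ring_nf
    _ = ∫⁻ t, ∫⁻ ω, ENNReal.ofReal (exp ((s * t) * f ω)) ∂μ ∂gaussianReal 0 1 := by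
        rw [lintegral_lintegral_swap (by fun_prop)]
        simp only [mul_right_comm s]
    _ ≤ ∫⁻ t, ENNReal.ofReal (exp (a * t ^ 2)) ∂gaussianReal 0 1 := by
        refine lintegral_mono fun t => (hsub _).trans_eq ?_
        rw [mul_pow, hs]
        ring_nf
    _ = ENNReal.ofReal (√(1 - 2 * a))⁻¹ := lintegral_exp_mul_sq_gaussianReal ha

theorem subgaussian_implies_psi_two
    {Ω : Type*} [MeasurableSpace Ω] (μ : Measure Ω) [IsProbabilityMeasure μ]
    (f : Ω → ℝ) (hf : Measurable f)
    (hsub : ∀ x : ℝ,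
      ∫⁻ ω, ENNReal.ofReal (Real.exp (x * f ω)) ∂μ
        ≤ ENNReal.ofReal (Real.exp (x ^ 2 / 2))) :
    ∫⁻ ω, ENNReal.ofReal
        (Real.exp ((f ω / Real.sqrt (2 * (Real.exp 1 + 1) / (Real.exp 1 - 1))) ^ 2)) ∂μ
      ≤ ENNReal.ofReal (Real.exp 1) := by
  have he : 2 ≤ exp 1 := by linarith [add_one_le_exp (1 : ℝ)]
  set a := (exp 1 - 1) / (2 * (exp 1 + 1)) with ha_def
  have h_sq (ω : Ω) : (f ω / √(2 * (exp 1 + 1) / (exp 1 - 1))) ^ 2 = a * f ω ^ 2 := by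
    rw [div_pow, sq_sqrt (div_nonneg (by positivity) (by linarith)), ha_def]
    field_simp
  have h_one_sub : 1 - 2 * a = 2 / (exp 1 + 1) := by
    rw [ha_def]
    field_simp
    ring
  have ha₀ : 0 ≤ a := div_nonneg (by linarith) (by positivity)
  have ha : a < 1 / 2 := by linarith [show 0 < 2 / (exp 1 + 1) by positivity]
  calc _ = ∫⁻ ω, ENNReal.ofReal (exp (a * f ω ^ 2)) ∂μ := by simp_rw [h_sq]
    _ ≤ ENNReal.ofReal (√(1 - 2 * a))⁻¹ := lintegral_exp_mul_sq_le_of_subgaussian hf hsub ha₀ ha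
    _ ≤ ENNReal.ofReal (exp 1) := by
        refine ENNReal.ofReal_le_ofReal ?_
        rw [h_one_sub, ← sqrt_inv, inv_div, sqrt_le_iff]
        exact ⟨(exp_pos 1).le, by nlinarith⟩
end

section
/- Fix a > 0. Let (fₙ) be i.i.d. copies of f with E[sup_{n≥1} (log(n+1))^{-1/a} |fₙ|] ≤ 1. Then E[exp(|f/2|^a)] ≤ e, i.e., ‖f‖_{ψ_a} ≤ 2. -/
/-!
By Markov's inequality the supremum is below `2` with probability at least `1/2`, so the
independent events `|fₙ| ≤ tₙ`, where `tₙ = 2 (log (n + 2))^(1/a)`, hold simultaneously with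
probability at least `1/2`. With `pₙ = P(|f| > tₙ)` this reads `∏ (1 - pₙ) ≥ 1/2`, and
`1 - p ≤ e^(-p)` turns it into `∑ pₙ ≤ log 2`. Since `P(exp |f/2|^a > n + 2) = pₙ` and
`E X ≤ 2 + ∑ₙ P(X > n + 2)` for every real random variable `X`, we get
`E exp |f/2|^a ≤ 2 + log 2 < e`.
-/

open MeasureTheory ProbabilityTheory ENNReal

theorem sum_le_neg_log_of_le_prod_one_sub {ι : Type*} {s : Finset ι} {p : ι → ℝ} {c : ℝ}
    (hp : ∀ i ∈ s, p i ≤ 1) (hc : 0 < c) (h : c ≤ ∏ i ∈ s, (1 - p i)) :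
    ∑ i ∈ s, p i ≤ -Real.log c := by
  have hexp : c ≤ Real.exp (-∑ i ∈ s, p i) :=
    calc c ≤ ∏ i ∈ s, (1 - p i) := h
      _ ≤ ∏ i ∈ s, Real.exp (-p i) :=
        Finset.prod_le_prod (fun i hi => sub_nonneg.2 (hp i hi))
          fun i _ => Real.one_sub_le_exp_neg (p i)
      _ = Real.exp (-∑ i ∈ s, p i) := by rw [← Real.exp_sum, Finset.sum_neg_distrib]
  linarith [(Real.log_le_iff_le_exp hc).2 hexp]

theorem lt_exp_rpow_iff {a c y : ℝ} (ha : 0 < a) (hc : 1 ≤ c) (hy : 0 ≤ y) :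
    c < Real.exp (y ^ a) ↔ Real.log c ^ (1 / a) < y := by
  rw [← Real.log_lt_iff_lt_exp (by linarith), one_div,
    Real.rpow_inv_lt_iff_of_pos (Real.log_nonneg hc) hy ha]

theorem ofReal_le_tsum_indicator_lt {Ω : Type*} {X : Ω → ℝ} (ω : Ω) :
    ENNReal.ofReal (X ω) ≤ ∑' n : ℕ, {ω | (n : ℝ) < X ω}.indicator 1 ω :=
  calc ENNReal.ofReal (X ω) ≤ ⌈X ω⌉₊ := by
        rw [← ENNReal.ofReal_natCast]; exact ENNReal.ofReal_le_ofReal (Nat.le_ceil _)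
    _ = ∑ _n ∈ Finset.range ⌈X ω⌉₊, (1 : ℝ≥0∞) := by simp
    _ = ∑ n ∈ Finset.range ⌈X ω⌉₊, {ω | (n : ℝ) < X ω}.indicator 1 ω :=
        Finset.sum_congr rfl fun n hn =>
          (Set.indicator_of_mem (s := {ω | (n : ℝ) < X ω})
            (Nat.lt_ceil.1 (Finset.mem_range.1 hn)) 1).symm
    _ ≤ _ := ENNReal.sum_le_tsum _

theorem subset_iInter_abs_le_of_iSup_lt_two {Ω : Type*} (a : ℝ) (f : ℕ → Ω → ℝ) :
    {ω | (⨆ n : ℕ, ENNReal.ofReal (Real.log (n + 2) ^ (-(1 / a)) * |f n ω|)) < 2}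
      ⊆ ⋂ n : ℕ, {ω | |f n ω| ≤ 2 * Real.log (n + 2) ^ (1 / a)} := by
  intro ω hω
  refine Set.mem_iInter.2 fun n => ?_
  have hlog : 0 < Real.log (n + 2) := Real.log_pos (by linarith [n.cast_nonneg (α := ℝ)])
  have h := (le_iSup (fun n : ℕ => ENNReal.ofReal
    (Real.log (n + 2) ^ (-(1 / a)) * |f n ω|)) n).trans_lt hω
  rw [ENNReal.ofReal_lt_ofNat, Real.rpow_neg hlog.le,
    inv_mul_lt_iff₀ (Real.rpow_pos_of_pos hlog _), mul_comm] at h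
  exact h.le

section Probability

variable {Ω : Type*} [MeasurableSpace Ω] {μ : Measure Ω}

theorem ProbabilityTheory.iIndepFun.iIndepSet_preimage {ι β : Type*} [MeasurableSpace β]
    {f : ι → Ω → β} (hf : iIndepFun f μ) (hmeas : ∀ i, Measurable (f i)) {S : ι → Set β}
    (hS : ∀ i, MeasurableSet (S i)) : iIndepSet (fun i => f i ⁻¹' S i) μ :=
  (iIndepSet_iff_meas_biInter fun i => hmeas i (hS i)).2 fun _ =>
    hf.meas_biInter fun i _ => ⟨S i, hS i, rfl⟩

theorem tsum_measure_compl_le_neg_log {E : ℕ → Set Ω} (hE : ∀ n, MeasurableSet (E n))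
    (hind : iIndepSet E μ) {c : ℝ} (hc : 0 < c) (h : c ≤ μ.real (⋂ n, E n)) :
    ∑' n, μ (E n)ᶜ ≤ ENNReal.ofReal (-Real.log c) := by
  have := hind.isProbabilityMeasure
  refine ENNReal.tsum_le_of_sum_range_le fun N => ?_
  have hprod : c ≤ ∏ n ∈ Finset.range N, (1 - μ.real (E n)ᶜ) :=
    calc c ≤ μ.real (⋂ n, E n) := h
      _ ≤ μ.real (⋂ n ∈ Finset.range N, E n) :=
        measureReal_mono (Set.subset_iInter₂ fun n _ => Set.iInter_subset E n)
      _ = ∏ n ∈ Finset.range N, μ.real (E n) := by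
        simp only [measureReal_def, hind.meas_biInter, ENNReal.toReal_prod]
      _ = ∏ n ∈ Finset.range N, (1 - μ.real (E n)ᶜ) := by
        simp only [probReal_compl_eq_one_sub (hE _), _root_.sub_sub_cancel]
  calc ∑ n ∈ Finset.range N, μ (E n)ᶜ
      = ENNReal.ofReal (∑ n ∈ Finset.range N, μ.real (E n)ᶜ) := by
        rw [ENNReal.ofReal_sum_of_nonneg fun n _ => measureReal_nonneg]
        simp only [measureReal_def, ENNReal.ofReal_toReal (measure_ne_top _ _)]
    _ ≤ ENNReal.ofReal (-Real.log c) :=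
        ENNReal.ofReal_le_ofReal <|
          sum_le_neg_log_of_le_prod_one_sub (fun n _ => measureReal_le_one) hc hprod

theorem lintegral_ofReal_le_tsum_measure_lt {X : Ω → ℝ} (hX : Measurable X) :
    ∫⁻ ω, ENNReal.ofReal (X ω) ∂μ ≤ ∑' n : ℕ, μ {ω | (n : ℝ) < X ω} :=
  calc ∫⁻ ω, ENNReal.ofReal (X ω) ∂μ
      ≤ ∫⁻ ω, ∑' n : ℕ, {ω | (n : ℝ) < X ω}.indicator 1 ω ∂μ :=
        lintegral_mono ofReal_le_tsum_indicator_lt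
    _ = ∑' n : ℕ, μ {ω | (n : ℝ) < X ω} := by
        rw [lintegral_tsum fun n =>
          (measurable_one.indicator (measurableSet_lt measurable_const hX)).aemeasurable]
        simp only [lintegral_indicator_one (measurableSet_lt measurable_const hX)]

theorem lintegral_ofReal_le_add_tsum_measure_lt [IsProbabilityMeasure μ] {X : Ω → ℝ}
    (hX : Measurable X) (k : ℕ) :
    ∫⁻ ω, ENNReal.ofReal (X ω) ∂μ ≤ k + ∑' n : ℕ, μ {ω | (n : ℝ) + k < X ω} := by
  refine (lintegral_ofReal_le_tsum_measure_lt hX).trans ?_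
  rw [← ENNReal.summable.sum_add_tsum_nat_add' (k := k)]
  gcongr
  · simpa using Finset.sum_le_card_nsmul (Finset.range k) (fun n => μ {ω | (n : ℝ) < X ω}) 1
      fun n _ => prob_le_one
  · push_cast; rfl

theorem one_sub_inv_le_measure_lt [IsProbabilityMeasure μ] {Z : Ω → ℝ≥0∞} (hZ : Measurable Z)
    (h : ∫⁻ ω, Z ω ∂μ ≤ 1) (c : ℝ≥0∞) : 1 - c⁻¹ ≤ μ {ω | Z ω < c} := by
  have hmarkov : μ {ω | c ≤ Z ω} ≤ c⁻¹ :=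
    ENNReal.le_inv_iff_mul_le.2 <| by
      rw [mul_comm]; exact (mul_meas_ge_le_lintegral₀ hZ.aemeasurable c).trans h
  have hcompl : {ω | Z ω < c} = {ω | c ≤ Z ω}ᶜ := by ext; simp
  rw [hcompl, prob_compl_eq_one_sub (measurableSet_le measurable_const hZ)]
  exact tsub_le_tsub_left hmarkov 1

end Probability

theorem sup_log_bound_implies_psi_a
    (a : ℝ) (ha : 0 < a)
    {Ω : Type*} [MeasurableSpace Ω] (μ : Measure Ω) [IsProbabilityMeasure μ]
    (f : ℕ → Ω → ℝ) (hmeas : ∀ n, Measurable (f n))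
    (hind : iIndepFun f μ)
    (hid : ∀ n, Measure.map (f n) μ = Measure.map (f 0) μ)
    (hsup : ∫⁻ ω, ⨆ n : ℕ,
        ENNReal.ofReal ((Real.log (n + 2)) ^ (-(1 / a)) * |f n ω|) ∂μ ≤ 1) :
    ∫⁻ ω, ENNReal.ofReal (Real.exp (|f 0 ω / 2| ^ a)) ∂μ
      ≤ ENNReal.ofReal (Real.exp 1) := by
  set S : ℕ → Set ℝ := fun n => {x | |x| ≤ 2 * Real.log (n + 2) ^ (1 / a)}
  have hS : ∀ n, MeasurableSet (S n) := fun n => measurableSet_le (by fun_prop) (by fun_prop)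
  have hhalf : (2⁻¹ : ℝ) ≤ μ.real (⋂ n, f n ⁻¹' S n) := by
    have h := (one_sub_inv_le_measure_lt (by fun_prop) hsup 2).trans
      (measure_mono (subset_iInter_abs_le_of_iSup_lt_two a f))
    rw [ENNReal.one_sub_inv_two] at h
    calc (2⁻¹ : ℝ) = (2⁻¹ : ℝ≥0∞).toReal := by norm_num
      _ ≤ μ.real (⋂ n, f n ⁻¹' S n) := ENNReal.toReal_mono (measure_ne_top _ _) h
  have htail : ∑' n, μ (f n ⁻¹' S n)ᶜ ≤ ENNReal.ofReal (Real.log 2) := by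
    simpa [Real.log_inv] using tsum_measure_compl_le_neg_log (fun n => hmeas n (hS n))
      (hind.iIndepSet_preimage hmeas hS) (by norm_num) hhalf
  have hevent (n : ℕ) :
      μ {ω | (n : ℝ) + 2 < Real.exp (|f 0 ω / 2| ^ a)} = μ (f n ⁻¹' S n)ᶜ := by
    have hfn : IdentDistrib (f n) (f 0) μ μ := ⟨by fun_prop, by fun_prop, hid n⟩
    rw [← Set.preimage_compl, hfn.measure_mem_eq (hS n).compl]
    congr 1
    ext ω
    show (n : ℝ) + 2 < Real.exp (|f 0 ω / 2| ^ a) ↔ ¬|f 0 ω| ≤ 2 * Real.log (n + 2) ^ (1 / a)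
    rw [not_le, lt_exp_rpow_iff ha (by linarith [n.cast_nonneg (α := ℝ)]) (abs_nonneg _),
      abs_div, abs_two, lt_div_iff₀ two_pos, mul_comm]
  calc ∫⁻ ω, ENNReal.ofReal (Real.exp (|f 0 ω / 2| ^ a)) ∂μ
      ≤ 2 + ∑' n : ℕ, μ {ω | (n : ℝ) + 2 < Real.exp (|f 0 ω / 2| ^ a)} := by
        exact_mod_cast lintegral_ofReal_le_add_tsum_measure_lt (by fun_prop) 2
    _ ≤ 2 + ENNReal.ofReal (Real.log 2) := by simp only [hevent]; gcongr
    _ ≤ ENNReal.ofReal (Real.exp 1) := by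
        rw [← ENNReal.ofReal_ofNat 2,
          ← ENNReal.ofReal_add (by norm_num) (Real.log_nonneg one_le_two)]
        exact ENNReal.ofReal_le_ofReal (by linarith [Real.log_two_lt_d9, Real.exp_one_gt_d9])
end

section
/- Let (f₁,...,fₙ) be complex random variables on a probability space (T,m) such that for all complex (x₁,...,xₙ), E[exp(Re(Σ xₖ fₖ))] ≤ exp(s² Σ|xₖ|²/2). Assume ‖fₖ‖₂ = 1 and ‖fₖ‖_∞ ≤ C for all k. Then for any 0 < δ < 1/C there is a finite subset 𝒯 ⊂ T with log|𝒯| ≥ n(1 - δC)²/(2s²C²) such that (Σₖ |fₖ(x) - fₖ(y)|²)^{1/2} > δ√n for all distinct x, y ∈ 𝒯. -/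
/-!
Write `v t = (f₁ t, …, fₙ t) ∈ ℂⁿ` and take a maximal `δ√n`-separated set `𝒯` among the points
where `‖v‖ ≤ C√n` (if such separated sets can be arbitrarily large there is nothing to prove).
By maximality almost every `t` has some `u ∈ 𝒯` with `‖v t - v u‖ ≤ δ√n`, and Cauchy–Schwarz
turns this into `Re ⟪v u, v t⟫ ≥ ‖v t‖² - δCn`. So for `l ≥ 0`,
`exp (l (‖v t‖² - δCn)) ≤ ∑_{u ∈ 𝒯} exp (l Re ⟪v u, v t⟫)`. Integrating, Jensen and `E ‖v‖² = n`
bound the left side below by `exp (l n (1 - δC))`, while subgaussianity bounds the integral of each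
summand by `exp (s² l² C² n / 2)`. Optimising in `l` gives `|𝒯| ≥ exp (n (1 - δC)² / (2 s² C²))`.
-/

open MeasureTheory Real

lemma exists_separated_finset_card_ge_or_covers {α β : Type*} [PseudoMetricSpace β] (φ : α → β)
    (G : Set α) {r : ℝ} (hr : 0 ≤ r) (N : ℕ) :
    ∃ 𝒯 : Finset α, ↑𝒯 ⊆ G ∧ (𝒯 : Set α).Pairwise (fun x y => r < dist (φ x) (φ y)) ∧
      (N ≤ 𝒯.card ∨ ∀ t ∈ G, ∃ u ∈ 𝒯, dist (φ t) (φ u) ≤ r) := by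
  classical
  induction N with
  | zero => exact ⟨∅, by simp, by simp, Or.inl le_rfl⟩
  | succ N ih =>
    obtain ⟨𝒯, hG, hsep, hN | hcov⟩ := ih
    · by_cases hcov : ∀ t ∈ G, ∃ u ∈ 𝒯, dist (φ t) (φ u) ≤ r
      · exact ⟨𝒯, hG, hsep, Or.inr hcov⟩
      push Not at hcov
      obtain ⟨t, htG, hfar⟩ := hcov
      have ht : t ∉ 𝒯 := fun ht => (hfar t ht).not_ge (by simpa using hr)
      refine ⟨insert t 𝒯, ?_, ?_, Or.inl ?_⟩
      · simpa [Set.insert_subset_iff] using ⟨htG, hG⟩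
      · rw [Finset.coe_insert, Set.pairwise_insert_of_notMem ht]
        exact ⟨hsep, fun u hu => ⟨hfar u hu, dist_comm (φ t) (φ u) ▸ hfar u hu⟩⟩
      · rw [Finset.card_insert_of_notMem ht]
        omega
    · exact ⟨𝒯, hG, hsep, Or.inr hcov⟩

lemma sq_norm_sub_mul_le_re_inner {𝕜 E : Type*} [RCLike 𝕜] [SeminormedAddCommGroup E]
    [InnerProductSpace 𝕜 E] {a x : E} {r R : ℝ} (hxa : ‖x - a‖ ≤ r) (hx : ‖x‖ ≤ R) :
    ‖x‖ ^ 2 - r * R ≤ RCLike.re (inner 𝕜 a x) := by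
  have hsplit : RCLike.re (inner 𝕜 a x) = ‖x‖ ^ 2 - RCLike.re (inner 𝕜 (x - a) x) := by
    rw [inner_sub_left, map_sub, inner_self_eq_norm_sq]
    ring
  have hcs := re_inner_le_norm (𝕜 := 𝕜) (x - a) x
  have hrR : ‖x - a‖ * ‖x‖ ≤ r * R :=
    mul_le_mul hxa hx (norm_nonneg _) ((norm_nonneg _).trans hxa)
  linarith

def IsSubgaussianVector (𝕜 : Type*) {Ω E : Type*} [RCLike 𝕜] [MeasurableSpace Ω]
    [SeminormedAddCommGroup E] [InnerProductSpace 𝕜 E] (X : Ω → E) (s : ℝ) (μ : Measure Ω) :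
    Prop :=
  ∀ a : E, ∫⁻ ω, ENNReal.ofReal (exp (RCLike.re (inner 𝕜 a (X ω)))) ∂μ
    ≤ ENNReal.ofReal (exp (s ^ 2 * ‖a‖ ^ 2 / 2))

namespace IsSubgaussianVector

variable {𝕜 Ω E : Type*} [RCLike 𝕜] [MeasurableSpace Ω] {μ : Measure Ω}
  [NormedAddCommGroup E] [InnerProductSpace 𝕜 E] {X : Ω → E} {s : ℝ}

lemma integrable_exp (hX : IsSubgaussianVector 𝕜 X s μ) (hXm : AEStronglyMeasurable X μ)
    (a : E) : Integrable (fun ω => exp (RCLike.re (inner 𝕜 a (X ω)))) μ := by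
  refine (lintegral_ofReal_ne_top_iff_integrable ?_ (ae_of_all _ fun ω => (exp_pos _).le)).1
    ((hX a).trans_lt ENNReal.ofReal_lt_top).ne
  exact (continuous_exp.comp (RCLike.continuous_re.comp
    (continuous_const.inner continuous_id))).comp_aestronglyMeasurable hXm

lemma integral_exp_le (hX : IsSubgaussianVector 𝕜 X s μ) (hXm : AEStronglyMeasurable X μ)
    (a : E) : ∫ ω, exp (RCLike.re (inner 𝕜 a (X ω))) ∂μ ≤ exp (s ^ 2 * ‖a‖ ^ 2 / 2) := by
  rw [← ENNReal.ofReal_le_ofReal_iff (exp_pos _).le,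
    ofReal_integral_eq_lintegral_ofReal (hX.integrable_exp hXm a)
      (ae_of_all _ fun ω => (exp_pos _).le)]
  exact hX a

variable [IsProbabilityMeasure μ]

theorem exp_le_card_mul_of_covers (hX : IsSubgaussianVector 𝕜 X s μ)
    (hXm : AEStronglyMeasurable X μ) {R r M l : ℝ} (hR : ∀ᵐ ω ∂μ, ‖X ω‖ ≤ R)
    (hM : ∫ ω, ‖X ω‖ ^ 2 ∂μ = M) (hl : 0 ≤ l) (𝒜 : Finset E) (h𝒜 : ∀ a ∈ 𝒜, ‖a‖ ≤ R)
    (hcov : ∀ᵐ ω ∂μ, ∃ a ∈ 𝒜, ‖X ω - a‖ ≤ r) :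
    exp (l * (M - r * R)) ≤ 𝒜.card * exp (s ^ 2 * l ^ 2 * R ^ 2 / 2) := by
  set Z : E → Ω → ℝ := fun a ω => exp (RCLike.re (inner 𝕜 ((l : 𝕜) • a) (X ω)))
  have hZ : ∀ a ∈ 𝒜, Integrable (Z a) μ := fun a _ => hX.integrable_exp hXm _
  have hZle : ∀ a ∈ 𝒜, ∫ ω, Z a ω ∂μ ≤ exp (s ^ 2 * l ^ 2 * R ^ 2 / 2) := by
    intro a ha
    refine (hX.integral_exp_le hXm _).trans (exp_le_exp.2 ?_)
    rw [norm_smul, RCLike.norm_ofReal, abs_of_nonneg hl]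
    have ha2 : ‖a‖ ^ 2 ≤ R ^ 2 := pow_le_pow_left₀ (norm_nonneg a) (h𝒜 a ha) 2
    have hsl : 0 ≤ s ^ 2 * l ^ 2 := by positivity
    nlinarith
  set g : Ω → ℝ := fun ω => l * (‖X ω‖ ^ 2 - r * R)
  have hsq : Integrable (fun ω => ‖X ω‖ ^ 2) μ := by
    refine Integrable.of_bound (hXm.norm.pow 2) (R ^ 2) ?_
    filter_upwards [hR] with ω hω
    rw [norm_pow, norm_norm]
    exact pow_le_pow_left₀ (norm_nonneg _) hω 2
  have hg : Integrable g μ := (hsq.sub (integrable_const _)).const_mul l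
  have hexp_le : ∀ᵐ ω ∂μ, exp (g ω) ≤ ∑ a ∈ 𝒜, Z a ω := by
    filter_upwards [hR, hcov] with ω hωR ⟨a, ha, hωa⟩
    calc exp (g ω) ≤ Z a ω := by
          refine exp_le_exp.2 ?_
          rw [inner_smul_real_left, RCLike.smul_re]
          exact mul_le_mul_of_nonneg_left (sq_norm_sub_mul_le_re_inner hωa hωR) hl
      _ ≤ ∑ a ∈ 𝒜, Z a ω :=
          Finset.single_le_sum (f := fun a => Z a ω) (fun _ _ => (exp_pos _).le) ha
  have hexp : Integrable (fun ω => exp (g ω)) μ := by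
    refine (integrable_finsetSum _ hZ).mono' ?_ ?_
    · exact continuous_exp.comp_aestronglyMeasurable hg.aestronglyMeasurable
    · filter_upwards [hexp_le] with ω hω
      rwa [norm_of_nonneg (exp_pos _).le]
  calc exp (l * (M - r * R)) = exp (∫ ω, g ω ∂μ) := by
        rw [integral_const_mul, integral_sub hsq (integrable_const _), hM]
        simp
    _ ≤ ∫ ω, exp (g ω) ∂μ :=
        convexOn_exp.map_integral_le continuousOn_exp isClosed_univ (by simp) hg hexp
    _ ≤ ∫ ω, ∑ a ∈ 𝒜, Z a ω ∂μ := integral_mono_ae hexp (integrable_finsetSum _ hZ) hexp_le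
    _ = ∑ a ∈ 𝒜, ∫ ω, Z a ω ∂μ := integral_finsetSum _ hZ
    _ ≤ ∑ _a ∈ 𝒜, exp (s ^ 2 * l ^ 2 * R ^ 2 / 2) := Finset.sum_le_sum hZle
    _ = 𝒜.card * exp (s ^ 2 * l ^ 2 * R ^ 2 / 2) := by
        rw [Finset.sum_const, nsmul_eq_mul]

theorem exists_separated_finset (hX : IsSubgaussianVector 𝕜 X s μ)
    (hXm : AEStronglyMeasurable X μ) {R r M l : ℝ} (hR : ∀ᵐ ω ∂μ, ‖X ω‖ ≤ R)
    (hM : ∫ ω, ‖X ω‖ ^ 2 ∂μ = M) (hl : 0 ≤ l) (hr : 0 ≤ r) :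
    ∃ 𝒯 : Finset Ω, (𝒯 : Set Ω).Pairwise (fun x y => r < dist (X x) (X y)) ∧
      exp (l * (M - r * R) - s ^ 2 * l ^ 2 * R ^ 2 / 2) ≤ 𝒯.card := by
  classical
  obtain ⟨𝒯, h𝒯R, hsep, hlarge | hcov⟩ := exists_separated_finset_card_ge_or_covers X
    {ω | ‖X ω‖ ≤ R} hr ⌈exp (l * (M - r * R) - s ^ 2 * l ^ 2 * R ^ 2 / 2)⌉₊
  · exact ⟨𝒯, hsep, (Nat.le_ceil _).trans (mod_cast hlarge)⟩
  refine ⟨𝒯, hsep, ?_⟩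
  have hcov_image : ∀ᵐ ω ∂μ, ∃ a ∈ 𝒯.image X, ‖X ω - a‖ ≤ r := by
    filter_upwards [hR] with ω hω
    obtain ⟨u, hu, hωu⟩ := hcov ω hω
    exact ⟨X u, Finset.mem_image_of_mem X hu, by rwa [← dist_eq_norm]⟩
  have hcard_image := hX.exp_le_card_mul_of_covers hXm hR hM hl (𝒯.image X)
    (by simpa using fun ω hω => h𝒯R hω) hcov_image
  rw [exp_sub, div_le_iff₀ (exp_pos _)]
  exact hcard_image.trans
    (mul_le_mul_of_nonneg_right (mod_cast Finset.card_image_le) (exp_pos _).le)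

end IsSubgaussianVector

section Coordinates

variable {T ι : Type*} [Fintype ι] [MeasurableSpace T] {m : Measure T} {f : ι → T → ℂ}

lemma isSubgaussianVector_toLp {s : ℝ}
    (hsub : ∀ x : ι → ℂ, ∫⁻ t, ENNReal.ofReal (exp ((∑ k, x k * f k t).re)) ∂m
      ≤ ENNReal.ofReal (exp (s ^ 2 * (∑ k, ‖x k‖ ^ 2) / 2))) :
    IsSubgaussianVector ℂ (fun t => (WithLp.toLp 2 fun k => f k t : EuclideanSpace ℂ ι)) s m := by
  intro a
  simpa [PiLp.inner_apply, EuclideanSpace.norm_sq_eq, mul_comm]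
    using hsub fun k => starRingEnd ℂ (a k)

lemma ae_norm_toLp_le {C : ℝ} (hC : 0 ≤ C) (hbound : ∀ k, ∀ᵐ t ∂m, ‖f k t‖ ≤ C) :
    ∀ᵐ t ∂m, ‖(WithLp.toLp 2 fun k => f k t : EuclideanSpace ℂ ι)‖
      ≤ C * √(Fintype.card ι) := by
  filter_upwards [ae_all_iff.2 hbound] with t ht
  rw [EuclideanSpace.norm_eq, ← Real.sqrt_sq hC, ← Real.sqrt_mul (sq_nonneg C)]
  refine Real.sqrt_le_sqrt ?_
  calc ∑ k, ‖f k t‖ ^ 2 ≤ ∑ _k : ι, C ^ 2 :=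
        Finset.sum_le_sum fun k _ => pow_le_pow_left₀ (norm_nonneg _) (ht k) 2
    _ = C ^ 2 * Fintype.card ι := by simp [mul_comm]

lemma integral_norm_toLp_sq (hmeas : ∀ k, Measurable (f k))
    (hnorm : ∀ k, ∫⁻ t, ENNReal.ofReal (‖f k t‖ ^ 2) ∂m = 1) :
    ∫ t, ‖(WithLp.toLp 2 fun k => f k t : EuclideanSpace ℂ ι)‖ ^ 2 ∂m = Fintype.card ι := by
  have hmeas_sq : ∀ k, AEStronglyMeasurable (fun t => ‖f k t‖ ^ 2) m := fun k =>
    ((hmeas k).norm.pow_const 2).aestronglyMeasurable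
  have hint : ∀ k ∈ Finset.univ, Integrable (fun t => ‖f k t‖ ^ 2) m := fun k _ =>
    (lintegral_ofReal_ne_top_iff_integrable (hmeas_sq k)
      (ae_of_all _ fun t => sq_nonneg _)).1 (by rw [hnorm k]; exact ENNReal.one_ne_top)
  have hone : ∀ k, ∫ t, ‖f k t‖ ^ 2 ∂m = 1 := fun k => by
    rw [integral_eq_lintegral_of_nonneg_ae (ae_of_all _ fun t => sq_nonneg _) (hmeas_sq k),
      hnorm k, ENNReal.toReal_one]
  simp_rw [EuclideanSpace.norm_sq_eq]
  simp [integral_finsetSum _ hint, hone]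

end Coordinates

theorem subgaussian_separated_set_general
    {T : Type*} [MeasurableSpace T] (m : Measure T) [IsProbabilityMeasure m]
    (n : ℕ) (f : Fin n → T → ℂ) (hmeas : ∀ k, Measurable (f k))
    (s : ℝ)
    (hsub : ∀ x : Fin n → ℂ,
      ∫⁻ t, ENNReal.ofReal (Real.exp ((∑ k, x k * f k t).re)) ∂m
        ≤ ENNReal.ofReal (Real.exp (s ^ 2 * (∑ k, ‖x k‖ ^ 2) / 2)))
    (hnorm : ∀ k, ∫⁻ t, ENNReal.ofReal (‖f k t‖ ^ 2) ∂m = 1)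
    (C : ℝ) (hC : 0 < C) (hbound : ∀ k, ∀ᵐ t ∂m, ‖f k t‖ ≤ C)
    (δ : ℝ) (hδ : 0 < δ) (hδC : δ < 1 / C) :
    ∃ 𝒯 : Finset T,
      (n : ℝ) * (1 - δ * C) ^ 2 / (2 * s ^ 2 * C ^ 2) ≤ Real.log 𝒯.card ∧
      ∀ x ∈ 𝒯, ∀ y ∈ 𝒯, x ≠ y →
        δ * Real.sqrt n < Real.sqrt (∑ k, ‖f k x - f k y‖ ^ 2) := by
  set v : T → EuclideanSpace ℂ (Fin n) := fun t => WithLp.toLp 2 fun k => f k t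
  have hdist : ∀ x y, dist (v x) (v y) = √(∑ k, ‖f k x - f k y‖ ^ 2) := fun x y => by
    rw [EuclideanSpace.dist_eq]
    simp only [v, dist_eq_norm]
  set R := C * √n
  set l := (1 - δ * C) / (s ^ 2 * C ^ 2)
  have hl : 0 ≤ l := div_nonneg (by linarith [(lt_div_iff₀ hC).1 hδC]) (by positivity)
  -- `l` maximises the right-hand side, a quadratic in `l`
  have hexponent : (n : ℝ) * (1 - δ * C) ^ 2 / (2 * s ^ 2 * C ^ 2)
      = l * (n - δ * √n * R) - s ^ 2 * l ^ 2 * R ^ 2 / 2 := by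
    have hsqrt : √(n : ℝ) ^ 2 = n := Real.sq_sqrt n.cast_nonneg
    have hR : δ * √n * R = δ * C * n := by simp only [R]; linear_combination δ * C * hsqrt
    have hR2 : R ^ 2 = C ^ 2 * n := by simp only [R]; linear_combination C ^ 2 * hsqrt
    rw [hR, hR2]
    simp only [l]
    field_simp
    ring
  have hvR : ∀ᵐ t ∂m, ‖v t‖ ≤ R := by
    simpa only [Fintype.card_fin] using ae_norm_toLp_le hC.le hbound
  have hvM : ∫ t, ‖v t‖ ^ 2 ∂m = n := by
    simpa only [Fintype.card_fin] using integral_norm_toLp_sq hmeas hnorm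
  have hv : Measurable v := (WithLp.measurable_toLp 2 _).comp (measurable_pi_lambda _ hmeas)
  obtain ⟨𝒯, hsep, hcard⟩ := (isSubgaussianVector_toLp hsub).exists_separated_finset
    hv.aestronglyMeasurable hvR hvM hl (by positivity : 0 ≤ δ * √n)
  rw [← hexponent] at hcard
  exact ⟨𝒯, (Real.le_log_iff_exp_le ((exp_pos _).trans_le hcard)).2 hcard,
    fun x hx y hy hxy => hdist x y ▸ hsep hx hy hxy⟩

theorem subgaussian_separated_set
    {T : Type*} [MeasurableSpace T] (m : Measure T) [IsProbabilityMeasure m]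
    (n : ℕ) (f : Fin n → T → ℂ) (hmeas : ∀ k, Measurable (f k))
    (s : ℝ) (hs : 0 < s)
    (hsub : ∀ x : Fin n → ℂ,
      ∫⁻ t, ENNReal.ofReal (Real.exp ((∑ k, x k * f k t).re)) ∂m
        ≤ ENNReal.ofReal (Real.exp (s ^ 2 * (∑ k, ‖x k‖ ^ 2) / 2)))
    (hnorm : ∀ k, ∫⁻ t, ENNReal.ofReal (‖f k t‖ ^ 2) ∂m = 1)
    (C : ℝ) (hC : 0 < C) (hbound : ∀ k, ∀ᵐ t ∂m, ‖f k t‖ ≤ C)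
    (δ : ℝ) (hδ : 0 < δ) (hδC : δ < 1 / C) :
    ∃ 𝒯 : Finset T,
      (n : ℝ) * (1 - δ * C) ^ 2 / (2 * s ^ 2 * C ^ 2) ≤ Real.log 𝒯.card ∧
      ∀ x ∈ 𝒯, ∀ y ∈ 𝒯, x ≠ y →
        δ * Real.sqrt n < Real.sqrt (∑ k, ‖f k x - f k y‖ ^ 2) :=
  subgaussian_separated_set_general m n f hmeas s hsub hnorm C hC hbound δ hδ hδC
end

section
/- Let G be a finite abelian group and let f₁,...,fₙ be n distinct characters of G forming a subgaussian system with constant s (i.e., E[exp(Re(Σ xₖ fₖ))] ≤ exp(s² Σ|xₖ|²/2) for all complex xₖ, where E is the average over G). Then for any 0 < δ < 1, log|G| ≥ n(1-δ)²/(2s²). -/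
/-!
Every character takes the value 1 at the identity, so testing the subgaussian bound with the
constant vector `x = t` and keeping only the summand `g = 1` gives
`exp (n t) ≤ |G| exp (s² n t² / 2)`. At `t = 1 / s²` this reads `log |G| ≥ n / (2 s²)`.
-/

open Finset

section

variable {G ι : Type*} [MulOneClass G] [Fintype G] [Fintype ι]

lemma exp_card_mul_le_sum_exp_re (f : ι → G →* ℂ) (t : ℝ) :
    Real.exp (Fintype.card ι * t) ≤ ∑ g : G, Real.exp ((∑ k, (t : ℂ) * f k g).re) := by
  have hone : (∑ k, (t : ℂ) * f k 1).re = Fintype.card ι * t := by simp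
  calc Real.exp (Fintype.card ι * t) = Real.exp ((∑ k, (t : ℂ) * f k 1).re) := by rw [hone]
    _ ≤ _ := single_le_sum (f := fun g => Real.exp ((∑ k, (t : ℂ) * f k g).re))
        (fun _ _ => (Real.exp_pos _).le) (mem_univ 1)

lemma sub_le_log_card_of_subgaussian (f : ι → G →* ℂ) (s : ℝ)
    (hsub : ∀ x : ι → ℂ,
      (Fintype.card G : ℝ)⁻¹ * ∑ g : G, Real.exp ((∑ k, x k * f k g).re)
        ≤ Real.exp (s ^ 2 * (∑ k, ‖x k‖ ^ 2) / 2)) (t : ℝ) :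
    Fintype.card ι * t - s ^ 2 * (Fintype.card ι * t ^ 2) / 2 ≤ Real.log (Fintype.card G) := by
  have hG : (0 : ℝ) < Fintype.card G := by exact_mod_cast Fintype.card_pos
  have hbound : Real.exp (Fintype.card ι * t)
      ≤ Fintype.card G * Real.exp (s ^ 2 * (Fintype.card ι * t ^ 2) / 2) := by
    have := (exp_card_mul_le_sum_exp_re f t).trans
      ((inv_mul_le_iff₀ hG).mp (hsub fun _ => (t : ℂ)))
    simpa [Complex.norm_real] using this
  rw [sub_le_iff_le_add, ← Real.exp_le_exp, Real.exp_add, Real.exp_log hG]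
  exact hbound

end

theorem subgaussian_characters_card_bound_general
    (G : Type*) [CommGroup G] [Fintype G]
    (n : ℕ) (f : Fin n → G →* ℂ)
    (s : ℝ) (hs : 0 < s)
    (hsub : ∀ x : Fin n → ℂ,
      (Fintype.card G : ℝ)⁻¹ * ∑ g : G, Real.exp ((∑ k, x k * f k g).re)
        ≤ Real.exp (s ^ 2 * (∑ k, ‖x k‖ ^ 2) / 2)) :
    ∀ δ : ℝ, 0 < δ → δ < 1 →
      (n : ℝ) * (1 - δ) ^ 2 / (2 * s ^ 2) ≤ Real.log (Fintype.card G) := by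
  intro δ _ hδ1
  have hlog := sub_le_log_card_of_subgaussian f s hsub (1 / s ^ 2)
  have hopt : (n : ℝ) * (1 / s ^ 2) - s ^ 2 * (n * (1 / s ^ 2) ^ 2) / 2 = n / (2 * s ^ 2) := by
    field_simp
    ring
  rw [Fintype.card_fin, hopt] at hlog
  refine le_trans ?_ hlog
  gcongr
  exact mul_le_of_le_one_right n.cast_nonneg (pow_le_one₀ (by linarith) (by linarith))

theorem subgaussian_characters_card_bound
    (G : Type*) [CommGroup G] [Fintype G]
    (n : ℕ) (f : Fin n → G →* ℂ) (hinj : Function.Injective f)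
    (s : ℝ) (hs : 0 < s)
    (hsub : ∀ x : Fin n → ℂ,
      (Fintype.card G : ℝ)⁻¹ * ∑ g : G, Real.exp ((∑ k, x k * f k g).re)
        ≤ Real.exp (s ^ 2 * (∑ k, ‖x k‖ ^ 2) / 2)) :
    ∀ δ : ℝ, 0 < δ → δ < 1 →
      (n : ℝ) * (1 - δ) ^ 2 / (2 * s ^ 2) ≤ Real.log (Fintype.card G) :=
  subgaussian_characters_card_bound_general G n f s hs hsub
end

section
/- Let k < m < n be integers and let N(k,m,n) be the maximal cardinality of a family 𝒯 of m-element subsets of {1,...,n} with pairwise intersections of size at most k. Let A ⊂ ℤ with |A| = n, and let R(A) be the set of ξ ∈ {-1,0,1}^A with Σ_{a∈A} ξ_a·a = 0. If |R(A)| < N(k,m,n), then A contains a quasi-independent subset B with |B| ≥ m - k. -/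
/-- A finite set `B ⊆ ℤ` is quasi-independent if the only relation
`∑_{b ∈ B} ξ_b · b = 0` with coefficients `ξ_b ∈ {-1, 0, 1}` is the trivial one. -/
def QuasiIndependent (B : Finset ℤ) : Prop :=
  ∀ ξ : ℤ → ℤ, (∀ b, ξ b ∈ ({-1, 0, 1} : Set ℤ)) →
    ∑ b ∈ B, ξ b * b = 0 → ∀ b ∈ B, ξ b = 0

/-- The set of relations with coefficients in `{-1,0,1}` supported on `A`. -/
def Relations (A : Finset ℤ) : Set (ℤ → ℤ) :=
  {ξ | (∀ a, ξ a ∈ ({-1, 0, 1} : Set ℤ)) ∧ (∀ a, a ∉ A → ξ a = 0) ∧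
    ∑ a ∈ A, ξ a * a = 0}

/-- `constantWeightCodeBound k m n` is `N(k,m,n)`: the maximal cardinality of a
family of `m`-element subsets of `{1,…,n}` with pairwise intersections of size
at most `k`. -/
noncomputable def constantWeightCodeBound (k m n : ℕ) : ℕ :=
  sSup {c : ℕ | ∃ 𝒯 : Finset (Finset (Fin n)), 𝒯.card = c ∧
    (∀ t ∈ 𝒯, t.card = m) ∧
    ∀ s ∈ 𝒯, ∀ t ∈ 𝒯, s ≠ t → (s ∩ t).card ≤ k}

/-!
In any finite `T ⊆ ℤ`, pick a relation `ξ` of maximal support: the zero set of `ξ` in `T` is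
quasi-independent, since a nontrivial relation on it could be added to `ξ`. Hence, if `A` has no
quasi-independent subset of size `m - k`, every `m`-subset of `A` supports a relation with more
than `k` nonzero coefficients. Choosing one for each member of an extremal family of `m`-subsets
of `A` with pairwise intersections of size at most `k` is injective, because a relation shared by
two members has its support in their intersection; so `N(k,m,n) ≤ |R(A)|`.
-/

open Finset

lemma relations_finite (A : Finset ℤ) : (Relations A).Finite := by
  have hcube : (Set.univ.pi fun _ : A => ({-1, 0, 1} : Set ℤ)).Finite :=
    Set.Finite.pi fun _ => Set.toFinite _
  refine Set.Finite.of_finite_image (f := fun ξ (a : A) => ξ a) (hcube.subset ?_) ?_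
  · rintro _ ⟨ξ, hξ, rfl⟩ a -
    exact hξ.1 a
  · intro ξ hξ ζ hζ h
    funext a
    by_cases ha : a ∈ A
    · exact congrFun h ⟨a, ha⟩
    · rw [hξ.2.1 a ha, hζ.2.1 a ha]

lemma zero_mem_relations (A : Finset ℤ) : 0 ∈ Relations A :=
  ⟨fun _ => by simp, fun _ _ => rfl, by simp⟩

lemma relations_mono {T A : Finset ℤ} (h : T ⊆ A) : Relations T ⊆ Relations A := by
  rintro ξ ⟨hval, hsupp, hsum⟩
  refine ⟨hval, fun a ha => hsupp a fun haT => ha (h haT), ?_⟩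
  rwa [← sum_subset h fun a _ haT => by rw [hsupp a haT, zero_mul]]

lemma filter_ne_zero_subset_of_mem_relations {S T : Finset ℤ} {ξ : ℤ → ℤ}
    (hξ : ξ ∈ Relations T) : S.filter (ξ · ≠ 0) ⊆ S ∩ T := by
  intro a ha
  rw [mem_filter] at ha
  exact mem_inter.mpr ⟨ha.1, by_contra fun haT => ha.2 (hξ.2.1 a haT)⟩

lemma quasiIndependent_filter_eq_zero_of_maximal {T : Finset ℤ} {ξ : ℤ → ℤ}
    (hξ : ξ ∈ Relations T)
    (hmax : ∀ ζ ∈ Relations T, (T.filter (ζ · ≠ 0)).card ≤ (T.filter (ξ · ≠ 0)).card) :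
    QuasiIndependent (T.filter (ξ · = 0)) := by
  set B := T.filter (ξ · = 0)
  intro η hη hηsum b hbB
  by_contra hb
  set ζ : ℤ → ℤ := fun a => if a ∈ B then η a else ξ a with hζ
  have hζ_eq : ∀ a ∈ T, ζ a * a = (if a ∈ B then η a * a else 0) + ξ a * a := by
    intro a _
    by_cases haB : a ∈ B
    · simp [hζ, haB, (mem_filter.mp haB).2]
    · simp [hζ, haB]
  have hζrel : ζ ∈ Relations T := by
    refine ⟨fun a => ?_, fun a haT => ?_, ?_⟩
    · by_cases haB : a ∈ B
      · simpa [hζ, haB] using hη a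
      · simpa [hζ, haB] using hξ.1 a
    · have haB : a ∉ B := fun h => haT (filter_subset _ _ h)
      simpa [hζ, haB] using hξ.2.1 a haT
    · rw [sum_congr rfl hζ_eq, sum_add_distrib, sum_ite_mem,
        inter_eq_right.mpr (filter_subset _ _), hηsum, hξ.2.2, add_zero]
  have hsub : T.filter (ξ · ≠ 0) ⊂ T.filter (ζ · ≠ 0) := by
    have hle : T.filter (ξ · ≠ 0) ⊆ T.filter (ζ · ≠ 0) := by
      intro a ha
      have haB : a ∉ B := fun h => (mem_filter.mp ha).2 (mem_filter.mp h).2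
      simpa [hζ, haB] using ha
    refine (ssubset_iff_of_subset hle).mpr ⟨b, ?_, ?_⟩
    · simpa [hζ, hbB] using ⟨filter_subset _ _ hbB, hb⟩
    · simpa using fun _ => (mem_filter.mp hbB).2
  exact (card_lt_card hsub).not_ge (hmax ζ hζrel)

lemma exists_quasiIndependent_or_exists_relation_card_support_gt (T : Finset ℤ) (k : ℕ) :
    (∃ B ⊆ T, QuasiIndependent B ∧ T.card - k ≤ B.card) ∨
      ∃ ξ ∈ Relations T, k < (T.filter (ξ · ≠ 0)).card := by
  obtain ⟨ξ, hξ, hmax⟩ := Set.exists_max_image (Relations T)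
    (fun ξ => (T.filter (ξ · ≠ 0)).card) (relations_finite T) ⟨0, zero_mem_relations T⟩
  by_cases hk : k < (T.filter (ξ · ≠ 0)).card
  · exact .inr ⟨ξ, hξ, hk⟩
  · refine .inl ⟨T.filter (ξ · = 0), filter_subset _ _,
      quasiIndependent_filter_eq_zero_of_maximal hξ hmax, ?_⟩
    have := card_filter_add_card_filter_not (s := T) (ξ · = 0)
    simp only [ne_eq] at hk this
    omega

lemma card_le_ncard_relations {A : Finset ℤ} {k : ℕ} {𝒯 : Finset (Finset ℤ)}
    (h𝒯A : ∀ T ∈ 𝒯, T ⊆ A)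
    (h𝒯inter : ∀ S ∈ 𝒯, ∀ T ∈ 𝒯, S ≠ T → (S ∩ T).card ≤ k)
    (h𝒯rel : ∀ T ∈ 𝒯, ∃ ξ ∈ Relations T, k < (T.filter (ξ · ≠ 0)).card) :
    𝒯.card ≤ (Relations A).ncard := by
  choose! g hgrel hgcard using h𝒯rel
  rw [← Set.ncard_coe_finset]
  refine Set.ncard_le_ncard_of_injOn g (fun T hT => ?_) (fun S hS T hT hST => ?_)
    (relations_finite A)
  · exact relations_mono (h𝒯A T hT) (hgrel T hT)
  · by_contra hne
    have := card_le_card (filter_ne_zero_subset_of_mem_relations (S := S) (hST ▸ hgrel T hT))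
    exact (hgcard S hS).not_ge (this.trans (h𝒯inter S hS T hT hne))

lemma exists_family_card_eq_constantWeightCodeBound (k m n : ℕ) :
    ∃ 𝒯 : Finset (Finset (Fin n)), 𝒯.card = constantWeightCodeBound k m n ∧
      (∀ t ∈ 𝒯, t.card = m) ∧ ∀ s ∈ 𝒯, ∀ t ∈ 𝒯, s ≠ t → (s ∩ t).card ≤ k := by
  refine Nat.sSup_mem (s := {c : ℕ | ∃ 𝒯 : Finset (Finset (Fin n)), 𝒯.card = c ∧
    (∀ t ∈ 𝒯, t.card = m) ∧ ∀ s ∈ 𝒯, ∀ t ∈ 𝒯, s ≠ t → (s ∩ t).card ≤ k})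
    ⟨0, ∅, by simp⟩ ⟨Fintype.card (Finset (Fin n)), ?_⟩
  rintro c ⟨𝒯, rfl, -⟩
  exact card_le_univ 𝒯

lemma exists_family_subset_card_eq_constantWeightCodeBound {α : Type*} [DecidableEq α]
    (k m : ℕ) (A : Finset α) :
    ∃ 𝒯 : Finset (Finset α), 𝒯.card = constantWeightCodeBound k m A.card ∧
      (∀ T ∈ 𝒯, T ⊆ A ∧ T.card = m) ∧ ∀ S ∈ 𝒯, ∀ T ∈ 𝒯, S ≠ T → (S ∩ T).card ≤ k := by
  obtain ⟨𝒯, h𝒯card, h𝒯m, h𝒯inter⟩ := exists_family_card_eq_constantWeightCodeBound k m A.card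
  let e : Fin A.card ↪ α := A.equivFin.symm.toEmbedding.trans (Function.Embedding.subtype _)
  refine ⟨𝒯.map (mapEmbedding e).toEmbedding, by rw [card_map, h𝒯card], ?_, ?_⟩
  · simp only [mem_map, RelEmbedding.coe_toEmbedding, mapEmbedding_apply]
    rintro _ ⟨t, ht, rfl⟩
    refine ⟨fun a ha => ?_, by rw [card_map, h𝒯m t ht]⟩
    obtain ⟨i, -, rfl⟩ := mem_map.mp ha
    exact (A.equivFin.symm i).2
  · simp only [mem_map, RelEmbedding.coe_toEmbedding, mapEmbedding_apply]
    rintro _ ⟨s, hs, rfl⟩ _ ⟨t, ht, rfl⟩ hst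
    rw [← map_inter, card_map]
    exact h𝒯inter s hs t ht (ne_of_apply_ne _ hst)

theorem few_relations_implies_quasiindependent_subset_general
    (k m n : ℕ)
    (A : Finset ℤ) (hA : A.card = n)
    (hR : (Relations A).ncard < constantWeightCodeBound k m n) :
    ∃ B ⊆ A, QuasiIndependent B ∧ m - k ≤ B.card := by
  by_contra! hsmall
  subst hA
  obtain ⟨𝒯, h𝒯card, h𝒯A, h𝒯inter⟩ := exists_family_subset_card_eq_constantWeightCodeBound k m A
  have h𝒯rel : ∀ T ∈ 𝒯, ∃ ξ ∈ Relations T, k < (T.filter (ξ · ≠ 0)).card := by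
    intro T hT
    obtain ⟨hTA, hTm⟩ := h𝒯A T hT
    refine (exists_quasiIndependent_or_exists_relation_card_support_gt T k).resolve_left ?_
    rintro ⟨B, hBT, hB, hBcard⟩
    have := hsmall B (hBT.trans hTA) hB
    omega
  have := card_le_ncard_relations (fun T hT => (h𝒯A T hT).1) h𝒯inter h𝒯rel
  omega

theorem few_relations_implies_quasiindependent_subset
    (k m n : ℕ) (hkm : k < m) (hmn : m < n)
    (A : Finset ℤ) (hA : A.card = n)
    (hR : (Relations A).ncard < constantWeightCodeBound k m n) :
    ∃ B ⊆ A, QuasiIndependent B ∧ m - k ≤ B.card :=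
  few_relations_implies_quasiindependent_subset_general k m n A hA hR
end

section
/- Suppose n is divisible by 8. Let N(k,m,n) be the maximal number of m-element subsets of {1,...,n} with pairwise intersections of size at most k. Then N(3n/8, n/2, n) ≥ c'·exp(n/17) for a universal constant c' > 0. -/
/-!
A code of maximal size cannot be extended, so the sets `{s : k < #(s ∩ t)}` around its words
cover all `C(n, m)` sets of size `m`. For `n = 8r`, `m = 4r`, `k = 3r` each of them has at most
`r * C(4r, r) ^ 2 ≤ r * 16 ^ r * e ^ (2r)` elements, while `C(8r, 4r) ≥ 256 ^ r / (8r)`. Hence the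
code has at least `(16 / e²) ^ r / (8 r²)` words, and `16 / e² > e ^ (8 / 17)`.
-/

open Finset

theorem Nat.choose_le_choose_of_le_of_le_half {n i j : ℕ} (hij : i ≤ j) (hj : j ≤ n / 2) :
    n.choose i ≤ n.choose j := by
  induction j, hij using Nat.le_induction with
  | base => rfl
  | succ j _ ih => exact (ih (by omega)).trans (Nat.choose_le_succ_of_lt_half_left (by omega))

theorem Nat.choose_mul_le_pow_mul_exp (a k : ℕ) :
    ((a * k).choose k : ℝ) ≤ a ^ k * Real.exp k :=
  calc ((a * k).choose k : ℝ) ≤ ((a * k : ℕ) : ℝ) ^ k / k.factorial := Nat.choose_le_pow_div k _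
    _ = a ^ k * ((k : ℝ) ^ k / k.factorial) := by push_cast; ring
    _ ≤ a ^ k * Real.exp k := by
      gcongr; exact Real.pow_div_factorial_le_exp (x := k) (Nat.cast_nonneg k) k

section

variable {α : Type*} [Fintype α] [DecidableEq α]

def IsConstantWeightCode (k m : ℕ) (𝒯 : Finset (Finset α)) : Prop :=
  (∀ t ∈ 𝒯, #t = m) ∧ ∀ s ∈ 𝒯, ∀ t ∈ 𝒯, s ≠ t → #(s ∩ t) ≤ k

/-- For words of weight `m`, `k < #(s ∩ t)` says that `s` lies within Hamming distance
`< 2 * (m - k)` of `t`. -/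
def closeSets (m k : ℕ) (t : Finset α) : Finset (Finset α) :=
  (univ.powersetCard m).filter fun s => k < #(s ∩ t)

theorem card_closeSets_le {m k : ℕ} {t : Finset α} (ht : #t = m) :
    #(closeSets m k t) ≤
      ∑ j ∈ Icc (k + 1) m, m.choose j * (Fintype.card α - m).choose (m - j) := by
  have hcover : closeSets m k t ⊆ (Icc (k + 1) m).biUnion fun j =>
      (t.powersetCard j ×ˢ tᶜ.powersetCard (m - j)).image fun p => p.1 ∪ p.2 := by
    intro s hs
    simp only [closeSets, mem_filter, mem_powersetCard_univ] at hs
    have hle : #(s ∩ t) ≤ m := ht ▸ card_le_card inter_subset_right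
    have hsplit := card_sdiff_add_card_inter s t
    simp only [mem_biUnion, mem_Icc, mem_image, mem_product, mem_powersetCard, Prod.exists]
    refine ⟨#(s ∩ t), ⟨hs.2, hle⟩, s ∩ t, s \ t, ⟨⟨inter_subset_right, rfl⟩, ?_, by omega⟩, ?_⟩
    · exact fun x hx => mem_compl.2 (mem_sdiff.1 hx).2
    · rw [union_comm, sdiff_union_inter]
  refine (card_le_card hcover).trans (card_biUnion_le.trans (sum_le_sum fun j _ => ?_))
  refine card_image_le.trans_eq ?_
  rw [card_product, card_powersetCard, card_powersetCard, card_compl, ht]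

theorem exists_isConstantWeightCode_subset_biUnion_closeSets (k m : ℕ) (hkm : k < m) :
    ∃ 𝒯 : Finset (Finset α), IsConstantWeightCode k m 𝒯 ∧
      univ.powersetCard m ⊆ 𝒯.biUnion (closeSets m k) := by
  obtain ⟨𝒯, h𝒯, hmax⟩ := Set.Finite.exists_maximalFor card
    {𝒯 : Finset (Finset α) | IsConstantWeightCode k m 𝒯} (Set.toFinite _)
    ⟨∅, by simp [IsConstantWeightCode]⟩
  refine ⟨𝒯, h𝒯, fun s hs => ?_⟩
  rw [mem_powersetCard_univ] at hs
  by_contra! hfar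
  simp only [mem_biUnion, closeSets, mem_filter, mem_powersetCard_univ, not_exists, not_and,
    not_lt] at hfar
  have hfar : ∀ t ∈ 𝒯, #(s ∩ t) ≤ k := fun t ht => hfar t ht hs
  have hsnot : s ∉ 𝒯 := fun hs' => by simpa [hs] using (hfar s hs').trans_lt hkm
  have hins : IsConstantWeightCode k m (insert s 𝒯) := by
    refine ⟨?_, ?_⟩
    · simpa [hs] using h𝒯.1
    · simp only [mem_insert]
      rintro a (rfl | ha) b (rfl | hb) hab
      · exact absurd rfl hab
      · exact hfar b hb
      · rw [inter_comm]; exact hfar a ha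
      · exact h𝒯.2 a ha b hb hab
  have := hmax hins (card_le_card (subset_insert s 𝒯))
  rw [card_insert_of_notMem hsnot] at this
  omega

end

theorem card_le_constantWeightCodeBound {k m n : ℕ} {𝒯 : Finset (Finset (Fin n))}
    (h𝒯 : IsConstantWeightCode k m 𝒯) : #𝒯 ≤ constantWeightCodeBound k m n := by
  refine le_csSup ⟨2 ^ n, ?_⟩ ⟨𝒯, rfl, h𝒯⟩
  rintro _ ⟨𝒮, rfl, -⟩
  simpa using card_le_univ 𝒮

theorem one_le_constantWeightCodeBound {k m n : ℕ} (hmn : m ≤ n) :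
    1 ≤ constantWeightCodeBound k m n := by
  obtain ⟨s, hs⟩ := exists_subset_card_eq (s := (univ : Finset (Fin n))) (by simpa using hmn)
  exact card_le_constantWeightCodeBound (𝒯 := {s}) ⟨by simpa using hs.2, by simp⟩

theorem choose_le_constantWeightCodeBound_mul {k m n B : ℕ} (hkm : k < m)
    (hB : ∀ t : Finset (Fin n), #t = m → #(closeSets m k t) ≤ B) :
    n.choose m ≤ constantWeightCodeBound k m n * B := by
  obtain ⟨𝒯, h𝒯, hcover⟩ :=
    exists_isConstantWeightCode_subset_biUnion_closeSets (α := Fin n) k m hkm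
  calc n.choose m = #(univ.powersetCard m : Finset (Finset (Fin n))) := by simp
    _ ≤ #𝒯 * B := (card_le_card hcover).trans
        (card_biUnion_le_card_mul _ _ _ fun t ht => hB t (h𝒯.1 t ht))
    _ ≤ constantWeightCodeBound k m n * B := by
        gcongr; exact card_le_constantWeightCodeBound h𝒯

theorem card_closeSets_le_mul_choose_sq {r : ℕ} {t : Finset (Fin (8 * r))} (ht : #t = 4 * r) :
    #(closeSets (4 * r) (3 * r) t) ≤ r * (4 * r).choose r ^ 2 := by
  have hterm : ∀ j ∈ Icc (3 * r + 1) (4 * r),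
      (4 * r).choose j * (8 * r - 4 * r).choose (4 * r - j) ≤ (4 * r).choose r ^ 2 := by
    intro j hj
    rw [mem_Icc] at hj
    have hsmall : (4 * r).choose (4 * r - j) ≤ (4 * r).choose r :=
      Nat.choose_le_choose_of_le_of_le_half (by omega) (by omega)
    rw [show 8 * r - 4 * r = 4 * r by omega, ← Nat.choose_symm hj.2, sq]
    exact Nat.mul_le_mul hsmall hsmall
  calc #(closeSets (4 * r) (3 * r) t)
      ≤ ∑ j ∈ Icc (3 * r + 1) (4 * r), (4 * r).choose j * (8 * r - 4 * r).choose (4 * r - j) := by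
        simpa using card_closeSets_le ht
    _ ≤ #(Icc (3 * r + 1) (4 * r)) * (4 * r).choose r ^ 2 := sum_le_card_nsmul _ _ _ hterm
    _ = r * (4 * r).choose r ^ 2 := by rw [Nat.card_Icc]; congr 1; omega

theorem sixteen_pow_le_mul_constantWeightCodeBound {r : ℕ} (hr : 0 < r) :
    (16 : ℝ) ^ r ≤
      8 * r ^ 2 * Real.exp (2 * r) * constantWeightCodeBound (3 * r) (4 * r) (8 * r) := by
  set N := constantWeightCodeBound (3 * r) (4 * r) (8 * r)
  have hcentral : 4 ^ (4 * r) ≤ 8 * r * (8 * r).choose (4 * r) := by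
    have := Nat.four_pow_le_two_mul_self_mul_centralBinom (4 * r) (by omega)
    rwa [Nat.centralBinom, show 2 * (4 * r) = 8 * r by ring] at this
  have hcode : (8 * r).choose (4 * r) ≤ N * (r * (4 * r).choose r ^ 2) :=
    choose_le_constantWeightCodeBound_mul (by omega) fun t ht => card_closeSets_le_mul_choose_sq ht
  have hball : ((4 * r).choose r : ℝ) ^ 2 ≤ 16 ^ r * Real.exp (2 * r) := by
    calc ((4 * r).choose r : ℝ) ^ 2 ≤ (4 ^ r * Real.exp r) ^ 2 := by
          gcongr; exact_mod_cast Nat.choose_mul_le_pow_mul_exp 4 r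
      _ = 16 ^ r * Real.exp (2 * r) := by
          rw [mul_pow, ← Real.exp_nat_mul, ← pow_mul, mul_comm r 2, pow_mul]; norm_num
  have h : (16 : ℝ) ^ r * 16 ^ r ≤ 16 ^ r * (8 * r ^ 2 * Real.exp (2 * r) * N) := by
    calc (16 : ℝ) ^ r * 16 ^ r = 4 ^ (4 * r) := by rw [← mul_pow, pow_mul]; norm_num
      _ ≤ 8 * r * ((8 * r).choose (4 * r) : ℕ) := by exact_mod_cast hcentral
      _ ≤ 8 * r * (N * (r * ((4 * r).choose r : ℝ) ^ 2)) := by gcongr; exact_mod_cast hcode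
      _ ≤ 8 * r * (N * (r * (16 ^ r * Real.exp (2 * r)))) := by gcongr
      _ = 16 ^ r * (8 * r ^ 2 * Real.exp (2 * r) * N) := by ring
  exact le_of_mul_le_mul_left h (by positivity)

theorem exp_mul_le_two_hundred_mul_sixteen_pow (x : ℝ) (hx : 0 ≤ x) :
    Real.exp (8 * x / 17) * (8 * x ^ 2 * Real.exp (2 * x)) ≤ 200 * 16 ^ x := by
  have hquad : x ^ 2 / 25 ≤ Real.exp (3 / 10 * x) := by
    nlinarith [Real.quadratic_le_exp_of_nonneg (x := 3 / 10 * x) (by positivity)]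
  have hlog : 3 / 10 * x + 8 * x / 17 + 2 * x ≤ x * Real.log 16 := by
    rw [show (16 : ℝ) = 2 ^ 4 by norm_num, Real.log_pow]
    nlinarith [Real.log_two_gt_d9]
  calc Real.exp (8 * x / 17) * (8 * x ^ 2 * Real.exp (2 * x))
      = 200 * (x ^ 2 / 25 * Real.exp (8 * x / 17 + 2 * x)) := by rw [Real.exp_add]; ring
    _ ≤ 200 * (Real.exp (3 / 10 * x) * Real.exp (8 * x / 17 + 2 * x)) := by gcongr
    _ = 200 * Real.exp (3 / 10 * x + 8 * x / 17 + 2 * x) := by rw [← Real.exp_add, add_assoc]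
    _ ≤ 200 * 16 ^ x := by
        rw [Real.rpow_def_of_pos (by norm_num), mul_comm (Real.log 16)]; gcongr

theorem gilbert_varshamov_type_bound :
    ∃ c' : ℝ, 0 < c' ∧
      ∀ n : ℕ, 8 ∣ n →
        c' * Real.exp (n / 17) ≤ constantWeightCodeBound (3 * n / 8) (n / 2) n := by
  refine ⟨1 / 200, by norm_num, ?_⟩
  rintro n ⟨r, rfl⟩
  rw [show 3 * (8 * r) / 8 = 3 * r by omega, show 8 * r / 2 = 4 * r by omega]
  rcases Nat.eq_zero_or_pos r with rfl | hr
  · have h : (1 : ℝ) ≤ constantWeightCodeBound 0 0 0 := by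
      exact_mod_cast one_le_constantWeightCodeBound le_rfl
    push_cast
    rw [zero_div, Real.exp_zero, mul_one]
    linarith
  have hD : (0 : ℝ) < 8 * r ^ 2 * Real.exp (2 * r) := by positivity
  have hexp := exp_mul_le_two_hundred_mul_sixteen_pow r r.cast_nonneg
  rw [Real.rpow_natCast] at hexp
  refine le_of_mul_le_mul_right ?_ hD
  calc 1 / 200 * Real.exp ((8 * r : ℕ) / 17) * (8 * r ^ 2 * Real.exp (2 * r))
      = Real.exp (8 * r / 17) * (8 * r ^ 2 * Real.exp (2 * r)) / 200 := by push_cast; ring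
    _ ≤ 16 ^ r := by linarith
    _ ≤ 8 * r ^ 2 * Real.exp (2 * r) * constantWeightCodeBound (3 * r) (4 * r) (8 * r) :=
        sixteen_pow_le_mul_constantWeightCodeBound hr
    _ = _ := mul_comm _ _
end
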